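/- Let E be a vector lattice with the principal projection property, F a vector lattice, Φ : 𝔅(E) → 𝔅(F) a Boolean homomorphism, and T : E → F atomic subordinate to Φ. Define R : E → F by R x = |T x|. Then: (i) R is orthogonally additive; (ii) R is atomic subordinate to Φ; (iii) R is the least upper bound of T and −T among orthogonally additive operators, i.e. T x ≤ R x and −T x ≤ R x for all x ∈ E, and whenever G : E → F is orthogonally additive with T x ≤ G x and −T x ≤ G x for all x ∈ E, then R x ≤ G x for all x ∈ E. -/

import Mathlib

/-!
Given `x ⊥ y`, the principal projection `π` onto the band of `x` satisfies `π (x + y) = x`, so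
atomicity gives `T x = Φ(π) (T (x + y))` and `T y = (Id - Φ(π)) (T (x + y))`. Thus `T x` and `T y`
are the two complementary pieces of `T (x + y)` under the order projection `Φ(π)`: they are
disjoint and add up to `T (x + y)`, whence `|T (x + y)| = |T x| + |T y|`. Order projections
commute with `|·|`, which gives atomicity of `|T|`, and `|T x| = T x ⊔ -T x` gives minimality.
-/

namespace VL

/-- Two elements of a vector lattice are disjoint if `|x| ⊓ |y| = 0`. -/
def VDisjoint {G : Type*} [Lattice G] [AddCommGroup G] (x y : G) : Prop :=
  |x| ⊓ |y| = 0

/-- `y` is a fragment of `x` if `y ⊥ (x - y)`. -/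
def Fragment {G : Type*} [Lattice G] [AddCommGroup G] (y x : G) : Prop :=
  VDisjoint y (x - y)

/-- An order projection: a linear idempotent `π` with `0 ≤ π x ≤ x` for all `x ≥ 0`. -/
def IsOrderProjection {G : Type*} [Lattice G] [AddCommGroup G] [Module ℝ G]
    (π : G →ₗ[ℝ] G) : Prop :=
  (∀ x, π (π x) = π x) ∧ ∀ x : G, 0 ≤ x → 0 ≤ π x ∧ π x ≤ x

/-- A map between the order projections of `E` and of `F` is a Boolean homomorphism if it
maps order projections to order projections and preserves the Boolean operations
`π ∧ ρ = π ∘ ρ`, `π ∨ ρ = π + ρ - π ∘ ρ` and `compl π = Id - π`. -/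
def IsBooleanHom {E F : Type*} [Lattice E] [AddCommGroup E] [Module ℝ E]
    [Lattice F] [AddCommGroup F] [Module ℝ F]
    (Φ : (E →ₗ[ℝ] E) → (F →ₗ[ℝ] F)) : Prop :=
  (∀ π, IsOrderProjection π → IsOrderProjection (Φ π)) ∧
  (∀ π ρ, IsOrderProjection π → IsOrderProjection ρ →
    Φ (π ∘ₗ ρ) = Φ π ∘ₗ Φ ρ) ∧
  (∀ π ρ, IsOrderProjection π → IsOrderProjection ρ →
    Φ (π + ρ - π ∘ₗ ρ) = Φ π + Φ ρ - Φ π ∘ₗ Φ ρ) ∧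
  (∀ π, IsOrderProjection π → Φ (LinearMap.id - π) = LinearMap.id - Φ π)

/-- `T` is atomic subordinate to `Φ` if `T (π x) = Φ(π) (T x)` for every order projection. -/
def IsAtomic {E F : Type*} [Lattice E] [AddCommGroup E] [Module ℝ E]
    [Lattice F] [AddCommGroup F] [Module ℝ F]
    (Φ : (E →ₗ[ℝ] E) → (F →ₗ[ℝ] F)) (T : E → F) : Prop :=
  ∀ π : E →ₗ[ℝ] E, IsOrderProjection π → ∀ x : E, T (π x) = Φ π (T x)

/-- The principal projection property: for every `x` there is an order projection `π_x`
(the projection onto the band generated by `x`) such that `z - π_x z ⊥ x` for all `z`,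
and `π_x z ⊥ w` whenever `w ⊥ x`. -/
def HasPPP (E : Type*) [Lattice E] [AddCommGroup E] [Module ℝ E] : Prop :=
  ∀ x : E, ∃ π : E →ₗ[ℝ] E, IsOrderProjection π ∧
    (∀ z : E, VDisjoint (z - π z) x) ∧
    (∀ z w : E, VDisjoint w x → VDisjoint (π z) w)

/-- Dedekind completeness: every nonempty set bounded above has a supremum. -/
def DedekindComplete (F : Type*) [Lattice F] : Prop :=
  ∀ S : Set F, S.Nonempty → BddAbove S → ∃ b, IsLUB S b


variable {E F : Type*}
  [Lattice E] [AddCommGroup E] [Module ℝ E]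
  [CovariantClass E E (· + ·) (· ≤ ·)] [PosSMulMono ℝ E]
  [Lattice F] [AddCommGroup F] [Module ℝ F]
  [CovariantClass F F (· + ·) (· ≤ ·)] [PosSMulMono ℝ F]

def OrthogonallyAdditive {V W : Type*} [Lattice V] [AddCommGroup V] [AddCommGroup W]
    (T : V → W) : Prop :=
  ∀ x y : V, VDisjoint x y → T (x + y) = T x + T y

lemma VDisjoint.symm {G : Type*} [Lattice G] [AddCommGroup G] {a b : G} (h : VDisjoint a b) :
    VDisjoint b a := by
  rwa [VDisjoint, inf_comm]

section LatticeGroup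

variable {G : Type*} [Lattice G] [AddCommGroup G] [AddLeftMono G]

lemma abs_sub_eq_add_of_inf_eq_zero {c d : G} (h : c ⊓ d = 0) :
    |c - d| = c + d := by
  have hsup : c ⊔ d = c + d := by simpa [h] using inf_add_sup c d
  have hpos : (c - d)⁺ = c := by
    rw [posPart_def, show (c - d) ⊔ 0 = c ⊔ d - d by simp [sup_sub], hsup, add_sub_cancel_right]
  have hneg : (c - d)⁻ = d := by
    rw [negPart_def, show -(c - d) ⊔ 0 = c ⊔ d - c by simp [sup_sub, sup_comm], hsup,
      add_sub_cancel_left]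
  rw [← posPart_add_negPart (c - d), hpos, hneg]

lemma VDisjoint.abs_add {a b : G} (h : VDisjoint a b) : |a + b| = |a| + |b| := by
  refine le_antisymm (abs_add_le a b) ?_
  rw [← abs_sub_eq_add_of_inf_eq_zero h]
  simpa using abs_abs_sub_abs_le a (-b)

lemma VDisjoint.eq_zero_of_abs_le {a b : G} (h : VDisjoint a b) (hab : |a| ≤ |b|) : a = 0 := by
  have ha : |a| = 0 := (inf_eq_left.2 hab).symm.trans h
  exact le_antisymm (ha ▸ le_abs_self a) (neg_nonpos.1 (ha ▸ neg_le_abs a))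

end LatticeGroup

namespace IsOrderProjection

variable {G : Type*} [Lattice G] [AddCommGroup G] [Module ℝ G] [AddLeftMono G]
  {π : G →ₗ[ℝ] G}

lemma mono (hπ : IsOrderProjection π) {a b : G} (hab : a ≤ b) : π a ≤ π b := by
  simpa using (hπ.2 (b - a) (sub_nonneg.2 hab)).1

lemma compl (hπ : IsOrderProjection π) : IsOrderProjection (LinearMap.id - π) := by
  refine ⟨fun x => by simp [hπ.1 x], fun x hx => ?_⟩
  obtain ⟨h0, hle⟩ := hπ.2 x hx
  exact ⟨by simpa using hle, by simpa using h0⟩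

lemma abs_map (hπ : IsOrderProjection π) (u : G) : |π u| = π |u| := by
  obtain ⟨hp0, hple⟩ := hπ.2 _ (posPart_nonneg u)
  obtain ⟨hn0, hnle⟩ := hπ.2 _ (negPart_nonneg u)
  have hdisj : π u⁺ ⊓ π u⁻ = 0 :=
    le_antisymm ((inf_le_inf hple hnle).trans (posPart_inf_negPart_eq_zero u).le) (le_inf hp0 hn0)
  rw [← posPart_sub_negPart u, map_sub, abs_sub_eq_add_of_inf_eq_zero hdisj, ← map_add,
    posPart_sub_negPart, posPart_add_negPart]

lemma abs_map_le (hπ : IsOrderProjection π) (u : G) : |π u| ≤ |u| :=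
  hπ.abs_map u ▸ (hπ.2 |u| (abs_nonneg u)).2

lemma vdisjoint_map_sub (hπ : IsOrderProjection π) (u : G) : VDisjoint (π u) (u - π u) := by
  have habs_compl : |u - π u| = |u| - π |u| := by simpa using hπ.compl.abs_map u
  rw [VDisjoint, hπ.abs_map u, habs_compl]
  set e := π |u| ⊓ (|u| - π |u|)
  have he : 0 ≤ e := le_inf (hπ.2 _ (abs_nonneg u)).1 (by simpa using (hπ.2 _ (abs_nonneg u)).2)
  -- `π` annihilates `|u| - π |u|` and `Id - π` annihilates `π |u|`; apply both to `e`.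
  have hπe : π e ≤ 0 := by simpa [hπ.1] using hπ.mono (inf_le_right : e ≤ |u| - π |u|)
  have hπce : e - π e ≤ 0 := by simpa [hπ.1] using hπ.compl.mono (inf_le_left : e ≤ π |u|)
  exact le_antisymm (by simpa using add_nonpos hπe hπce) he

end IsOrderProjection

lemma HasPPP.exists_map_add_eq {V : Type*} [Lattice V] [AddCommGroup V] [Module ℝ V]
    [AddLeftMono V] (hV : HasPPP V) {x y : V} (hxy : VDisjoint x y) :
    ∃ π : V →ₗ[ℝ] V, IsOrderProjection π ∧ π (x + y) = x := by
  obtain ⟨π, hπ, hcompl_disj, hdisj⟩ := hV x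
  have hx : π x = x := by
    have := (hcompl_disj x).eq_zero_of_abs_le (by simpa using hπ.compl.abs_map_le x)
    exact (sub_eq_zero.1 this).symm
  have hy : π y = 0 := (hdisj y y hxy.symm).eq_zero_of_abs_le (hπ.abs_map_le y)
  exact ⟨π, hπ, by rw [map_add, hx, hy, add_zero]⟩

namespace IsAtomic

variable {V W : Type*} [Lattice V] [AddCommGroup V] [Module ℝ V]
  [Lattice W] [AddCommGroup W] [Module ℝ W]
  {Φ : (V →ₗ[ℝ] V) → (W →ₗ[ℝ] W)} {T : V → W}

lemma map_sub_map [AddLeftMono V] (hΦ : IsBooleanHom Φ) (hT : IsAtomic Φ T) {π : V →ₗ[ℝ] V}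
    (hπ : IsOrderProjection π) (z : V) : T (z - π z) = T z - Φ π (T z) := by
  simpa [hΦ.2.2.2 π hπ] using hT _ hπ.compl z

lemma orthogonallyAdditive_abs [AddLeftMono V] [AddLeftMono W] (hV : HasPPP V)
    (hΦ : IsBooleanHom Φ) (hT : IsAtomic Φ T) : OrthogonallyAdditive fun x => |T x| := by
  intro x y hxy
  obtain ⟨π, hπ, hπxy⟩ := hV.exists_map_add_eq hxy
  have hx : T x = Φ π (T (x + y)) := by simpa [hπxy] using hT π hπ (x + y)
  have hy : T y = T (x + y) - Φ π (T (x + y)) := by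
    simpa [hπxy] using hT.map_sub_map hΦ hπ (x + y)
  have hdisj : VDisjoint (T x) (T y) := hx ▸ hy ▸ (hΦ.1 π hπ).vdisjoint_map_sub (T (x + y))
  have hsum : T (x + y) = T x + T y := by rw [hx, hy, add_sub_cancel]
  simp only [hsum, hdisj.abs_add]

lemma abs [AddLeftMono W] (hΦ : IsBooleanHom Φ) (hT : IsAtomic Φ T) :
    IsAtomic Φ fun x => |T x| := by
  intro π hπ x
  simp only [hT π hπ x, (hΦ.1 π hπ).abs_map]

end IsAtomic

/-- for an atomic operator `T`, the map `R x = |T x|` is orthogonally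
additive, atomic subordinate to the same Boolean homomorphism, and is the least upper
bound of `T` and `-T` among orthogonally additive operators. -/
theorem atomic_abs
    (hE : HasPPP E) (Φ : (E →ₗ[ℝ] E) → (F →ₗ[ℝ] F)) (hΦ : IsBooleanHom Φ)
    (T : E → F) (hT : IsAtomic Φ T) (R : E → F) (hR : ∀ x, R x = |T x|) :
    (∀ x y : E, VDisjoint x y → R (x + y) = R x + R y) ∧
    IsAtomic Φ R ∧
    ((∀ x : E, T x ≤ R x ∧ -T x ≤ R x) ∧
      ∀ G : E → F, (∀ x y : E, VDisjoint x y → G (x + y) = G x + G y) →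
        (∀ x : E, T x ≤ G x ∧ -T x ≤ G x) → ∀ x : E, R x ≤ G x) := by
  obtain rfl : R = fun x => |T x| := funext hR
  exact ⟨hT.orthogonallyAdditive_abs hE hΦ, hT.abs hΦ,
    fun x => ⟨le_abs_self _, neg_le_abs _⟩, fun G _ hG x => abs_le'.2 (hG x)⟩

end VL
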